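/- Let T be the tree consisting of the path u0u1u2u3u4u5, a pendant path u3u'3u''3, leaves v3, v'3 adjacent to u''3, and leaves v5, v'5 adjacent to u5. If L is a list assignment with |L(u0)| ≥ 2, |L(u1)| ≥ 2, |L(u2)| ≥ 4, |L(u3)| ≥ 3, |L(u4)| ≥ 5, |L(u5)| ≥ 4, |L(u'3)| ≥ 5, |L(u''3)| ≥ 4, |L(v3)| ≥ 3, |L(v'3)| ≥ 2, |L(v5)| ≥ 3, |L(v'5)| ≥ 2, then T admits a 2-distance L-coloring. -/
import Mathlib


/-- The tree of the corresponding configuration, with vertices 0 = u0, 1 = u1, 2 = u2, 3 = u3, 4 = u4, 5 = u5, 6 = u'3, 7 = u''3, 8 = v3, 9 = v'3, 10 = v5, 11 = v'5. -/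
def T14 : SimpleGraph (Fin 12) :=
  SimpleGraph.fromRel (fun u v => (u = 0 ∧ v = 1) ∨ (u = 1 ∧ v = 2) ∨ (u = 2 ∧ v = 3) ∨ (u = 3 ∧ v = 4) ∨ (u = 4 ∧ v = 5) ∨ (u = 3 ∧ v = 6) ∨ (u = 6 ∧ v = 7) ∨ (u = 7 ∧ v = 8) ∨ (u = 7 ∧ v = 9) ∨ (u = 5 ∧ v = 10) ∨ (u = 5 ∧ v = 11))

instance : DecidableRel T14.Adj := fun u v =>
  decidable_of_iff _ (SimpleGraph.fromRel_adj _ u v).symm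

namespace ColorX14

/-- there is an element of `s` -/
lemma pick0 (s : Finset ℕ) (h : 1 ≤ s.card) : ∃ x, x ∈ s :=
  Finset.card_pos.mp h

lemma card2 (a b : ℕ) : ({a, b} : Finset ℕ).card ≤ 2 :=
  (Finset.card_insert_le _ _).trans (by simp)

lemma card3 (a b c : ℕ) : ({a, b, c} : Finset ℕ).card ≤ 3 :=
  (Finset.card_insert_le _ _).trans (by have := card2 b c; omega)

lemma pick1 (s : Finset ℕ) (a : ℕ) (h : 2 ≤ s.card) : ∃ x, x ∈ s ∧ x ≠ a := by
  by_contra hc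
  push_neg at hc
  have hsub : s ⊆ {a} := fun x hx => Finset.mem_singleton.mpr (hc x hx)
  have := Finset.card_le_card hsub
  simp only [Finset.card_singleton] at this
  omega

lemma pick2 (s : Finset ℕ) (a b : ℕ) (h : 3 ≤ s.card) :
    ∃ x, x ∈ s ∧ x ≠ a ∧ x ≠ b := by
  by_contra hc
  push_neg at hc
  have hsub : s ⊆ {a, b} := by
    intro x hx
    rcases eq_or_ne x a with rfl | hxa
    · simp
    · simp [hc x hx hxa]
  have := (Finset.card_le_card hsub).trans (card2 a b)
  omega

lemma pick3 (s : Finset ℕ) (a b c : ℕ) (h : 4 ≤ s.card) :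
    ∃ x, x ∈ s ∧ x ≠ a ∧ x ≠ b ∧ x ≠ c := by
  by_contra hc
  push_neg at hc
  have hsub : s ⊆ {a, b, c} := by
    intro x hx
    rcases eq_or_ne x a with rfl | hxa
    · simp
    · rcases eq_or_ne x b with rfl | hxb
      · simp
      · simp [hc x hx hxa hxb]
  have := (Finset.card_le_card hsub).trans (card3 a b c)
  omega

/-- SDR for a 4-clique with list sizes (2,3,3,3) and a Hall-type hypothesis. -/
lemma sdr4 {A B C D : Finset ℕ} (hA : 2 ≤ A.card) (hB : 3 ≤ B.card)
    (hC : 3 ≤ C.card) (hD : 3 ≤ D.card)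
    (hall : (∃ x ∈ A ∪ B ∪ C, x ∉ D) ∨ 4 ≤ D.card) :
    ∃ a b c d, a ∈ A ∧ b ∈ B ∧ c ∈ C ∧ d ∈ D ∧
      a ≠ b ∧ a ≠ c ∧ a ≠ d ∧ b ≠ c ∧ b ≠ d ∧ c ≠ d := by
  rcases hall with ⟨x, hx, hxD⟩ | h4
  · simp only [Finset.mem_union] at hx
    rcases hx with (hxA | hxB) | hxC
    · obtain ⟨b, hb, hbx⟩ := pick1 B x (by omega)
      obtain ⟨c, hc, hcx, hcb⟩ := pick2 C x b hC
      obtain ⟨d, hd, hdb, hdc⟩ := pick2 D b c hD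
      exact ⟨x, b, c, d, hxA, hb, hc, hd, hbx.symm, hcx.symm,
        (ne_of_mem_of_not_mem hd hxD).symm, hcb.symm, hdb.symm, hdc.symm⟩
    · obtain ⟨a, ha, hax⟩ := pick1 A x hA
      obtain ⟨c, hc, hcx, hca⟩ := pick2 C x a hC
      obtain ⟨d, hd, hda, hdc⟩ := pick2 D a c hD
      exact ⟨a, x, c, d, ha, hxB, hc, hd, hax, hca.symm, hda.symm, hcx.symm,
        (ne_of_mem_of_not_mem hd hxD).symm, hdc.symm⟩
    · obtain ⟨a, ha, hax⟩ := pick1 A x hA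
      obtain ⟨b, hb, hbx, hba⟩ := pick2 B x a hB
      obtain ⟨d, hd, hda, hdb⟩ := pick2 D a b hD
      exact ⟨a, b, x, d, ha, hb, hxC, hd, hba.symm, hax, hda.symm, hbx,
        hdb.symm, (ne_of_mem_of_not_mem hd hxD).symm⟩
  · obtain ⟨a, ha⟩ := pick0 A (by omega)
    obtain ⟨b, hb, hba⟩ := pick1 B a (by omega)
    obtain ⟨c, hc, hca, hcb⟩ := pick2 C a b hC
    obtain ⟨d, hd, hda, hdb, hdc⟩ := pick3 D a b c h4
    exact ⟨a, b, c, d, ha, hb, hc, hd, hba.symm, hca.symm, hda.symm,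
      hcb.symm, hdb.symm, hdc.symm⟩

/-- SDR for a 4-clique with list sizes (2,3,3,2) and a Hall-type hypothesis. -/
lemma sdr4b {A B C D : Finset ℕ} (hA : 2 ≤ A.card) (hB : 3 ≤ B.card)
    (hC : 3 ≤ C.card) (hD : 2 ≤ D.card)
    (hall : (∃ x ∈ A ∪ B ∪ D, x ∉ C) ∨ 4 ≤ C.card) :
    ∃ a b c d, a ∈ A ∧ b ∈ B ∧ c ∈ C ∧ d ∈ D ∧
      a ≠ b ∧ a ≠ c ∧ a ≠ d ∧ b ≠ c ∧ b ≠ d ∧ c ≠ d := by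
  have mk2 : ∀ x ∈ D, x ∉ C → (∃ a b c d, a ∈ A ∧ b ∈ B ∧ c ∈ C ∧ d ∈ D ∧
      a ≠ b ∧ a ≠ c ∧ a ≠ d ∧ b ≠ c ∧ b ≠ d ∧ c ≠ d) := by
    intro x hxD hxC
    obtain ⟨a, ha, hax⟩ := pick1 A x hA
    obtain ⟨b, hb, hbx, hba⟩ := pick2 B x a hB
    obtain ⟨c, hc, hca, hcb⟩ := pick2 C a b hC
    exact ⟨a, b, c, x, ha, hb, hc, hxD, hba.symm, hca.symm, hax, hcb.symm,
      hbx, ne_of_mem_of_not_mem hc hxC⟩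
  rcases hall with ⟨x, hx, hxC⟩ | h4
  · simp only [Finset.mem_union] at hx
    rcases hx with (hxA | hxB) | hxD
    · obtain ⟨d, hd, hdx⟩ := pick1 D x hD
      obtain ⟨b, hb, hbx, hbd⟩ := pick2 B x d hB
      obtain ⟨c, hc, hcd, hcb⟩ := pick2 C d b hC
      exact ⟨x, b, c, d, hxA, hb, hc, hd, hbx.symm,
        (ne_of_mem_of_not_mem hc hxC).symm, hdx.symm, hcb.symm, hbd, hcd⟩
    · obtain ⟨a, ha, hax⟩ := pick1 A x hA
      by_cases hd2 : ∃ z, z ∈ D ∧ z ≠ x ∧ z ≠ a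
      · obtain ⟨d, hd, hdx, hda⟩ := hd2
        obtain ⟨c, hc, hca, hcd⟩ := pick2 C a d hC
        exact ⟨a, x, c, d, ha, hxB, hc, hd, hax, hca.symm, hda.symm,
          (ne_of_mem_of_not_mem hc hxC).symm, hdx.symm, hcd⟩
      · push_neg at hd2
        have hxD : x ∈ D := by
          by_contra hn
          have hsub : D ⊆ {a} := by
            intro z hz
            have hzx : z ≠ x := fun h => hn (h ▸ hz)
            simp [hd2 z hz hzx]
          have := Finset.card_le_card hsub
          simp only [Finset.card_singleton] at this
          omega
        exact mk2 x hxD hxC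
    · exact mk2 x hxD hxC
  · obtain ⟨a, ha⟩ := pick0 A (by omega)
    obtain ⟨d, hd, hda⟩ := pick1 D a hD
    obtain ⟨b, hb, hba, hbd⟩ := pick2 B a d hB
    obtain ⟨c, hc, hca, hcd, hcb⟩ := pick3 C a d b h4
    exact ⟨a, b, c, d, ha, hb, hc, hd, hba.symm, hca.symm, hda.symm,
      hcb.symm, hbd, hcd⟩

/-- SDR for a 4-clique with list sizes (2,3,3,3), where the element of `B` must
avoid `π`, with a Hall hypothesis not involving `B`. -/
lemma esdr {A B C D : Finset ℕ} (π : ℕ) (hA : 2 ≤ A.card) (hB : 3 ≤ B.card)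
    (hC : 3 ≤ C.card) (hD : 3 ≤ D.card)
    (hall : (∃ x ∈ A ∪ C, x ∉ D) ∨ 4 ≤ D.card) :
    ∃ a b c d, a ∈ A ∧ b ∈ B ∧ c ∈ C ∧ d ∈ D ∧ b ≠ π ∧
      a ≠ b ∧ a ≠ c ∧ a ≠ d ∧ b ≠ c ∧ b ≠ d ∧ c ≠ d := by
  have mkA : ∀ x ∈ A, x ∉ D → (∃ a b c d, a ∈ A ∧ b ∈ B ∧ c ∈ C ∧ d ∈ D ∧ b ≠ π ∧
      a ≠ b ∧ a ≠ c ∧ a ≠ d ∧ b ≠ c ∧ b ≠ d ∧ c ≠ d) := by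
    intro x hxA hxD
    obtain ⟨b, hb, hbx, hbπ⟩ := pick2 B x π hB
    obtain ⟨c, hc, hcx, hcb⟩ := pick2 C x b hC
    obtain ⟨d, hd, hdb, hdc⟩ := pick2 D b c hD
    exact ⟨x, b, c, d, hxA, hb, hc, hd, hbπ, hbx.symm, hcx.symm,
      (ne_of_mem_of_not_mem hd hxD).symm, hcb.symm, hdb.symm, hdc.symm⟩
  rcases hall with ⟨x, hx, hxD⟩ | h4
  · simp only [Finset.mem_union] at hx
    rcases hx with hxA | hxC
    · exact mkA x hxA hxD
    · obtain ⟨b, hb, hbx, hbπ⟩ := pick2 B x π hB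
      by_cases hy : ∃ y, y ∈ A ∧ y ≠ x ∧ y ≠ b
      · obtain ⟨a, ha, hax, hab⟩ := hy
        obtain ⟨d, hd, hda, hdb⟩ := pick2 D a b hD
        exact ⟨a, b, x, d, ha, hb, hxC, hd, hbπ, hab, hax, hda.symm,
          hbx, hdb.symm, (ne_of_mem_of_not_mem hd hxD).symm⟩
      · push_neg at hy
        have hxA : x ∈ A := by
          by_contra hn
          have hsub : A ⊆ {b} := by
            intro z hz
            have hzx : z ≠ x := fun h => hn (h ▸ hz)
            simp [hy z hz hzx]
          have := Finset.card_le_card hsub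
          simp only [Finset.card_singleton] at this
          omega
        exact mkA x hxA hxD
  · obtain ⟨a, ha⟩ := pick0 A (by omega)
    obtain ⟨b, hb, hba, hbπ⟩ := pick2 B a π hB
    obtain ⟨c, hc, hca, hcb⟩ := pick2 C a b hC
    obtain ⟨d, hd, hda, hdb, hdc⟩ := pick3 D a b c h4
    exact ⟨a, b, c, d, ha, hb, hc, hd, hbπ, hba.symm, hca.symm, hda.symm,
      hcb.symm, hdb.symm, hdc.symm⟩

/-- if removing a single (different) element from `P` lands inside the smaller
set `Q` in two ways, the removed elements agree. -/
lemma uniq {P Q : Finset ℕ} {f g : ℕ} (hcard : Q.card < P.card)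
    (hf : P \ {f} ⊆ Q) (hg : P \ {g} ⊆ Q) : f = g := by
  by_contra hne
  have hsub : P ⊆ Q := by
    intro x hx
    rcases eq_or_ne x f with rfl | hxf
    · exact hg (Finset.mem_sdiff.mpr ⟨hx, by simp [hne]⟩)
    · exact hf (Finset.mem_sdiff.mpr ⟨hx, by simp [hxf]⟩)
  have := Finset.card_le_card hsub
  omega

lemma mk_hallA (L : Fin 12 → Finset ℕ) (c2 c3 : ℕ)
    (hPA : ¬(L 9 ⊆ L 8 ∧ L 7 \ {c3} ⊆ L 8 ∧ (L 8).card ≤ 3)) :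
    (∃ x ∈ L 9 ∪ (L 6 \ {c2, c3}) ∪ (L 7 \ {c3}), x ∉ L 8) ∨ 4 ≤ (L 8).card := by
  by_cases hs9 : L 9 ⊆ L 8
  · by_cases hs7 : L 7 \ {c3} ⊆ L 8
    · right
      by_contra hlt
      exact hPA ⟨hs9, hs7, by omega⟩
    · left
      obtain ⟨x, hx, hn⟩ := Finset.not_subset.mp hs7
      exact ⟨x, Finset.mem_union_right _ hx, hn⟩
  · left
    obtain ⟨x, hx, hn⟩ := Finset.not_subset.mp hs9
    exact ⟨x, Finset.mem_union_left _ (Finset.mem_union_left _ hx), hn⟩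

lemma mk_hallA' (L : Fin 12 → Finset ℕ) (c3 : ℕ)
    (hPA : ¬(L 9 ⊆ L 8 ∧ L 7 \ {c3} ⊆ L 8 ∧ (L 8).card ≤ 3)) :
    (∃ x ∈ L 9 ∪ (L 7 \ {c3}), x ∉ L 8) ∨ 4 ≤ (L 8).card := by
  by_cases hs9 : L 9 ⊆ L 8
  · by_cases hs7 : L 7 \ {c3} ⊆ L 8
    · right
      by_contra hlt
      exact hPA ⟨hs9, hs7, by omega⟩
    · left
      obtain ⟨x, hx, hn⟩ := Finset.not_subset.mp hs7
      exact ⟨x, Finset.mem_union_right _ hx, hn⟩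
  · left
    obtain ⟨x, hx, hn⟩ := Finset.not_subset.mp hs9
    exact ⟨x, Finset.mem_union_left _ hx, hn⟩

lemma mk_hallB (L : Fin 12 → Finset ℕ) (c2 c3 : ℕ)
    (hPB : ¬(L 11 ⊆ L 10 ∧ L 5 \ {c3} ⊆ L 10 ∧ (L 10).card ≤ 3)) :
    ∀ g : ℕ, (∃ x ∈ (L 4 \ {c2, c3, g}) ∪ (L 5 \ {c3}) ∪ L 11, x ∉ L 10) ∨
      4 ≤ (L 10).card := by
  intro g
  by_cases hs11 : L 11 ⊆ L 10
  · by_cases hs5 : L 5 \ {c3} ⊆ L 10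
    · right
      by_contra hlt
      exact hPB ⟨hs11, hs5, by omega⟩
    · left
      obtain ⟨x, hx, hn⟩ := Finset.not_subset.mp hs5
      exact ⟨x, Finset.mem_union_left _ (Finset.mem_union_right _ hx), hn⟩
  · left
    obtain ⟨x, hx, hn⟩ := Finset.not_subset.mp hs11
    exact ⟨x, Finset.mem_union_right _ hx, hn⟩

/-- From twelve colors with the needed distinctness facts, build the coloring. -/
lemma assemble (L : Fin 12 → Finset ℕ)
    (c0 c1 c2 c3 c4 c5 c6 c7 c8 c9 c10 c11 : ℕ)
    (m0 : c0 ∈ L 0) (m1 : c1 ∈ L 1) (m2 : c2 ∈ L 2) (m3 : c3 ∈ L 3)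
    (m4 : c4 ∈ L 4) (m5 : c5 ∈ L 5) (m6 : c6 ∈ L 6) (m7 : c7 ∈ L 7)
    (m8 : c8 ∈ L 8) (m9 : c9 ∈ L 9) (m10 : c10 ∈ L 10) (m11 : c11 ∈ L 11)
    (n01 : c0 ≠ c1) (n02 : c0 ≠ c2) (n12 : c1 ≠ c2) (n13 : c1 ≠ c3)
    (n23 : c2 ≠ c3) (n24 : c2 ≠ c4) (n26 : c2 ≠ c6) (n34 : c3 ≠ c4)
    (n35 : c3 ≠ c5) (n36 : c3 ≠ c6) (n37 : c3 ≠ c7) (n45 : c4 ≠ c5)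
    (n46 : c4 ≠ c6) (n4a : c4 ≠ c10) (n4b : c4 ≠ c11) (n5a : c5 ≠ c10)
    (n5b : c5 ≠ c11) (nab : c10 ≠ c11) (n67 : c6 ≠ c7) (n68 : c6 ≠ c8)
    (n69 : c6 ≠ c9) (n78 : c7 ≠ c8) (n79 : c7 ≠ c9) (n89 : c8 ≠ c9) :
    ∃ φ : Fin 12 → ℕ, (∀ v, φ v ∈ L v) ∧
      ∀ u v : Fin 12, u ≠ v →
        (T14.Adj u v ∨ ∃ w, T14.Adj u w ∧ T14.Adj w v) → φ u ≠ φ v := by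
  refine ⟨fun v => [c0, c1, c2, c3, c4, c5, c6, c7, c8, c9, c10, c11].getD v.1 0,
    ?_, ?_⟩
  · intro v
    fin_cases v <;> assumption
  · intro u v hne hadj
    fin_cases u <;> fin_cases v <;>
      first
        | exact absurd rfl hne
        | assumption
        | (apply Ne.symm; assumption)
        | exact absurd hadj (by decide)

/-- the generic final step : color the two 4-cliques via the SDR lemmas. -/
lemma finish (L : Fin 12 → Finset ℕ)
    (h4 : 5 ≤ (L 4).card) (h5 : 4 ≤ (L 5).card) (h6 : 5 ≤ (L 6).card)
    (h7 : 4 ≤ (L 7).card) (h8 : 3 ≤ (L 8).card) (h9 : 2 ≤ (L 9).card)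
    (h10 : 3 ≤ (L 10).card) (h11 : 2 ≤ (L 11).card)
    (c0 c1 c2 c3 : ℕ)
    (m0 : c0 ∈ L 0) (m1 : c1 ∈ L 1) (m2 : c2 ∈ L 2) (m3 : c3 ∈ L 3)
    (n01 : c0 ≠ c1) (n02 : c0 ≠ c2) (n12 : c1 ≠ c2) (n13 : c1 ≠ c3)
    (n23 : c2 ≠ c3)
    (hallA : (∃ x ∈ L 9 ∪ (L 6 \ {c2, c3}) ∪ (L 7 \ {c3}), x ∉ L 8) ∨
      4 ≤ (L 8).card)
    (hallB : ∀ g : ℕ, (∃ x ∈ (L 4 \ {c2, c3, g}) ∪ (L 5 \ {c3}) ∪ L 11, x ∉ L 10) ∨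
      4 ≤ (L 10).card) :
    ∃ φ : Fin 12 → ℕ, (∀ v, φ v ∈ L v) ∧
      ∀ u v : Fin 12, u ≠ v →
        (T14.Adj u v ∨ ∃ w, T14.Adj u w ∧ T14.Adj w v) → φ u ≠ φ v := by
  have hB6 : 3 ≤ ((L 6) \ {c2, c3}).card := by
    have := Finset.card_le_card_sdiff_add_card (s := L 6) (t := {c2, c3})
    have := card2 c2 c3
    omega
  have hC7 : 3 ≤ ((L 7) \ {c3}).card := by
    have := Finset.card_le_card_sdiff_add_card (s := L 7) (t := {c3})
    simp only [Finset.card_singleton] at this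
    omega
  obtain ⟨c9, c6, c7, c8, i9, i6, i7, i8, k96, k97, k98, k67, k68, k78⟩ :=
    sdr4 h9 hB6 hC7 h8 hallA
  obtain ⟨m6, hn6⟩ := Finset.mem_sdiff.mp i6
  simp only [Finset.mem_insert, Finset.mem_singleton, not_or] at hn6
  obtain ⟨n62, n63⟩ := hn6
  obtain ⟨m7, hn7⟩ := Finset.mem_sdiff.mp i7
  simp only [Finset.mem_singleton] at hn7
  have hA4 : 2 ≤ ((L 4) \ {c2, c3, c6}).card := by
    have := Finset.card_le_card_sdiff_add_card (s := L 4) (t := {c2, c3, c6})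
    have := card3 c2 c3 c6
    omega
  have hB5 : 3 ≤ ((L 5) \ {c3}).card := by
    have := Finset.card_le_card_sdiff_add_card (s := L 5) (t := {c3})
    simp only [Finset.card_singleton] at this
    omega
  obtain ⟨c4, c5, c10, c11, i4, i5, m10, m11, k45, k4a, k4b, k5a, k5b, kab⟩ :=
    sdr4b hA4 hB5 h10 h11 (hallB c6)
  obtain ⟨m4, hn4⟩ := Finset.mem_sdiff.mp i4
  simp only [Finset.mem_insert, Finset.mem_singleton, not_or] at hn4
  obtain ⟨n42, n43, n46⟩ := hn4
  obtain ⟨m5, hn5⟩ := Finset.mem_sdiff.mp i5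
  simp only [Finset.mem_singleton] at hn5
  exact assemble L c0 c1 c2 c3 c4 c5 c6 c7 c8 c9 c10 c11
    m0 m1 m2 m3 m4 m5 m6 m7 i8 i9 m10 m11
    n01 n02 n12 n13 n23 (Ne.symm n42) (Ne.symm n62) (Ne.symm n43) (Ne.symm hn5)
    (Ne.symm n63) (Ne.symm hn7) k45 n46 k4a k4b k5a k5b kab k67 k68 (Ne.symm k96)
    k78 (Ne.symm k97) (Ne.symm k98)

/-- the final step in the cases where the color of `u'3` must avoid `π` in order
to save the second clique. -/
lemma finishE (L : Fin 12 → Finset ℕ)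
    (h4 : 5 ≤ (L 4).card) (h5 : 4 ≤ (L 5).card) (h6 : 5 ≤ (L 6).card)
    (h7 : 4 ≤ (L 7).card) (h8 : 3 ≤ (L 8).card) (h9 : 2 ≤ (L 9).card)
    (h10 : 3 ≤ (L 10).card) (h11 : 2 ≤ (L 11).card)
    (c0 c1 c2 c3 π : ℕ)
    (m0 : c0 ∈ L 0) (m1 : c1 ∈ L 1) (m2 : c2 ∈ L 2) (m3 : c3 ∈ L 3)
    (n01 : c0 ≠ c1) (n02 : c0 ≠ c2) (n12 : c1 ≠ c2) (n13 : c1 ≠ c3)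
    (n23 : c2 ≠ c3)
    (hallA : (∃ x ∈ L 9 ∪ (L 7 \ {c3}), x ∉ L 8) ∨ 4 ≤ (L 8).card)
    (hπ4 : π ∈ L 4) (hπ10 : π ∉ L 10) (hπ2 : π ≠ c2) (hπ3 : π ≠ c3) :
    ∃ φ : Fin 12 → ℕ, (∀ v, φ v ∈ L v) ∧
      ∀ u v : Fin 12, u ≠ v →
        (T14.Adj u v ∨ ∃ w, T14.Adj u w ∧ T14.Adj w v) → φ u ≠ φ v := by
  have hB6 : 3 ≤ ((L 6) \ {c2, c3}).card := by
    have := Finset.card_le_card_sdiff_add_card (s := L 6) (t := {c2, c3})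
    have := card2 c2 c3
    omega
  have hC7 : 3 ≤ ((L 7) \ {c3}).card := by
    have := Finset.card_le_card_sdiff_add_card (s := L 7) (t := {c3})
    simp only [Finset.card_singleton] at this
    omega
  obtain ⟨c9, c6, c7, c8, i9, i6, i7, i8, k6π, k96, k97, k98, k67, k68, k78⟩ :=
    esdr π h9 hB6 hC7 h8 hallA
  obtain ⟨m6, hn6⟩ := Finset.mem_sdiff.mp i6
  simp only [Finset.mem_insert, Finset.mem_singleton, not_or] at hn6
  obtain ⟨n62, n63⟩ := hn6
  obtain ⟨m7, hn7⟩ := Finset.mem_sdiff.mp i7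
  simp only [Finset.mem_singleton] at hn7
  have hA4 : 2 ≤ ((L 4) \ {c2, c3, c6}).card := by
    have := Finset.card_le_card_sdiff_add_card (s := L 4) (t := {c2, c3, c6})
    have := card3 c2 c3 c6
    omega
  have hB5 : 3 ≤ ((L 5) \ {c3}).card := by
    have := Finset.card_le_card_sdiff_add_card (s := L 5) (t := {c3})
    simp only [Finset.card_singleton] at this
    omega
  have hallB : (∃ x ∈ (L 4 \ {c2, c3, c6}) ∪ (L 5 \ {c3}) ∪ L 11, x ∉ L 10) ∨
      4 ≤ (L 10).card := by
    left
    refine ⟨π, Finset.mem_union_left _ (Finset.mem_union_left _ ?_), hπ10⟩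
    refine Finset.mem_sdiff.mpr ⟨hπ4, ?_⟩
    simp only [Finset.mem_insert, Finset.mem_singleton, not_or]
    exact ⟨hπ2, hπ3, fun h => k6π (h.symm)⟩
  obtain ⟨c4, c5, c10, c11, i4, i5, m10, m11, k45, k4a, k4b, k5a, k5b, kab⟩ :=
    sdr4b hA4 hB5 h10 h11 hallB
  obtain ⟨m4, hn4⟩ := Finset.mem_sdiff.mp i4
  simp only [Finset.mem_insert, Finset.mem_singleton, not_or] at hn4
  obtain ⟨n42, n43, n46⟩ := hn4
  obtain ⟨m5, hn5⟩ := Finset.mem_sdiff.mp i5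
  simp only [Finset.mem_singleton] at hn5
  exact assemble L c0 c1 c2 c3 c4 c5 c6 c7 c8 c9 c10 c11
    m0 m1 m2 m3 m4 m5 m6 m7 i8 i9 m10 m11
    n01 n02 n12 n13 n23 (Ne.symm n42) (Ne.symm n62) (Ne.symm n43) (Ne.symm hn5)
    (Ne.symm n63) (Ne.symm hn7) k45 n46 k4a k4b k5a k5b kab k67 k68 (Ne.symm k96)
    k78 (Ne.symm k97) (Ne.symm k98)

end ColorX14

open ColorX14 in
/-- The configuration admits a 2-distance coloring from the given lists. -/
theorem colorable_x (L : Fin 12 → Finset ℕ)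
    (h0 : 2 ≤ (L 0).card)
    (h1 : 2 ≤ (L 1).card)
    (h2 : 4 ≤ (L 2).card)
    (h3 : 3 ≤ (L 3).card)
    (h4 : 5 ≤ (L 4).card)
    (h5 : 4 ≤ (L 5).card)
    (h6 : 5 ≤ (L 6).card)
    (h7 : 4 ≤ (L 7).card)
    (h8 : 3 ≤ (L 8).card)
    (h9 : 2 ≤ (L 9).card)
    (h10 : 3 ≤ (L 10).card)
    (h11 : 2 ≤ (L 11).card) :
    ∃ φ : Fin 12 → ℕ, (∀ v, φ v ∈ L v) ∧
      ∀ u v : Fin 12, u ≠ v →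
        (T14.Adj u v ∨ ∃ w, T14.Adj u w ∧ T14.Adj w v) → φ u ≠ φ v := by
  classical
  obtain ⟨c0, m0⟩ := pick0 (L 0) (by omega)
  obtain ⟨c1, m1, n10⟩ := pick1 (L 1) c0 h1
  by_cases hM1 : ∃ t ∈ L 3 \ {c1},
      ¬(L 9 ⊆ L 8 ∧ L 7 \ {t} ⊆ L 8 ∧ (L 8).card ≤ 3) ∧
      ¬(L 11 ⊆ L 10 ∧ L 5 \ {t} ⊆ L 10 ∧ (L 10).card ≤ 3)
  · obtain ⟨t, ht, hPA, hPB⟩ := hM1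
    obtain ⟨ht3, htc1⟩ := Finset.mem_sdiff.mp ht
    simp only [Finset.mem_singleton] at htc1
    obtain ⟨c2, m2, n20, n21, n2t⟩ := pick3 (L 2) c0 c1 t h2
    exact finish L h4 h5 h6 h7 h8 h9 h10 h11 c0 c1 c2 t m0 m1 m2 ht3
      n10.symm n20.symm n21.symm (Ne.symm htc1) n2t
      (mk_hallA L c2 t hPA) (mk_hallB L c2 t hPB)
  · -- every candidate color for u3 is "bad" for one of the two cliques
    have hBad : ∀ t ∈ L 3 \ {c1},
        (L 9 ⊆ L 8 ∧ L 7 \ {t} ⊆ L 8 ∧ (L 8).card ≤ 3) ∨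
        (L 11 ⊆ L 10 ∧ L 5 \ {t} ⊆ L 10 ∧ (L 10).card ≤ 3) := by
      intro t ht
      by_contra hc
      rw [not_or] at hc
      exact hM1 ⟨t, ht, hc.1, hc.2⟩
    have hO3card : 1 < (L 3 \ {c1}).card := by
      have := Finset.card_le_card_sdiff_add_card (s := L 3) (t := {c1})
      simp only [Finset.card_singleton] at this
      omega
    obtain ⟨t1, ht1, t2, ht2, hne12⟩ := Finset.one_lt_card.mp hO3card
    -- main body, for `f` bad for clique A and `e` bad for clique B
    have key : ∀ f e, f ∈ L 3 \ {c1} → e ∈ L 3 \ {c1} → f ≠ e →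
        (L 9 ⊆ L 8 ∧ L 7 \ {f} ⊆ L 8 ∧ (L 8).card ≤ 3) →
        (L 11 ⊆ L 10 ∧ L 5 \ {e} ⊆ L 10 ∧ (L 10).card ≤ 3) →
        ∃ φ : Fin 12 → ℕ, (∀ v, φ v ∈ L v) ∧
          ∀ u v : Fin 12, u ≠ v →
            (T14.Adj u v ∨ ∃ w, T14.Adj u w ∧ T14.Adj w v) → φ u ≠ φ v := by
      intro f e hf he hfe hAf hBe
      obtain ⟨hf3, hfc1⟩ := Finset.mem_sdiff.mp hf
      simp only [Finset.mem_singleton] at hfc1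
      obtain ⟨he3, hec1⟩ := Finset.mem_sdiff.mp he
      simp only [Finset.mem_singleton] at hec1
      have hPBf : ¬(L 11 ⊆ L 10 ∧ L 5 \ {f} ⊆ L 10 ∧ (L 10).card ≤ 3) := by
        intro hb
        exact hfe (uniq (P := L 5) (Q := L 10) (by omega) hb.2.1 hBe.2.1)
      have hPAe : ¬(L 9 ⊆ L 8 ∧ L 7 \ {e} ⊆ L 8 ∧ (L 8).card ≤ 3) := by
        intro hb
        exact hfe (uniq (P := L 7) (Q := L 8) (by omega) hAf.2.1 hb.2.1)
      by_cases hM2a : ∃ x, x ∈ L 2 ∧ x ≠ c0 ∧ x ≠ c1 ∧ x ≠ f ∧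
          ¬(L 6 \ {x, f} ⊆ L 8)
      · -- use `f` on u3; the clique A condition is saved through the list of u'3
        obtain ⟨c2, m2, n20, n21, n2f, hns⟩ := hM2a
        obtain ⟨y, hy, hyn⟩ := Finset.not_subset.mp hns
        exact finish L h4 h5 h6 h7 h8 h9 h10 h11 c0 c1 c2 f m0 m1 m2 hf3
          n10.symm n20.symm n21.symm (Ne.symm hfc1) n2f
          (Or.inl ⟨y, Finset.mem_union_left _ (Finset.mem_union_right _ hy), hyn⟩)
          (mk_hallB L c2 f hPBf)
      · -- use `e` on u3
        have hR1 : 1 ≤ ((L 4) \ (L 10 ∪ {e})).card := by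
          have h1' := Finset.card_le_card_sdiff_add_card (s := L 4)
            (t := L 10 ∪ {e})
          have h2' : (L 10 ∪ {e}).card ≤ (L 10).card + 1 :=
            (Finset.card_union_le _ _).trans (by simp)
          have := hBe.2.2
          omega
        by_cases hR2 : 2 ≤ ((L 4) \ (L 10 ∪ {e})).card
        · -- generic situation : a free color of L4 outside L10 remains
          obtain ⟨c2, m2, n20, n21, n2e⟩ := pick3 (L 2) c0 c1 e h2
          obtain ⟨π, hπ, hπ2⟩ := pick1 ((L 4) \ (L 10 ∪ {e})) c2 hR2
          obtain ⟨hπ4, hπn⟩ := Finset.mem_sdiff.mp hπ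
          simp only [Finset.mem_union, Finset.mem_singleton, not_or] at hπn
          exact finishE L h4 h5 h6 h7 h8 h9 h10 h11 c0 c1 c2 e π m0 m1 m2 he3
            n10.symm n20.symm n21.symm (Ne.symm hec1) n2e
            (mk_hallA' L e hPAe) hπ4 hπn.1 hπ2 hπn.2
        · obtain ⟨ρ, hρ⟩ := pick0 _ hR1
          obtain ⟨hρ4, hρn⟩ := Finset.mem_sdiff.mp hρ
          simp only [Finset.mem_union, Finset.mem_singleton, not_or] at hρn
          by_cases hx : ∃ x, x ∈ L 2 ∧ x ≠ c0 ∧ x ≠ c1 ∧ x ≠ e ∧ x ≠ ρ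
          · obtain ⟨c2, m2, n20, n21, n2e, n2ρ⟩ := hx
            exact finishE L h4 h5 h6 h7 h8 h9 h10 h11 c0 c1 c2 e ρ m0 m1 m2 he3
              n10.symm n20.symm n21.symm (Ne.symm hec1) n2e
              (mk_hallA' L e hPAe) hρ4 hρn.1 (fun h => n2ρ h.symm) hρn.2
          · -- escape : recolor u0 and u1, and give u3 the old color of u1
            have hsub : ∀ t ∈ L 3 \ {c1}, t = f ∨ t = e := by
              intro t ht
              refine (hBad t ht).imp (fun hb => ?_) (fun hb => ?_)
              · exact uniq (P := L 7) (Q := L 8) (by omega) hb.2.1 hAf.2.1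
              · exact uniq (P := L 5) (Q := L 10) (by omega) hb.2.1 hBe.2.1
            have hc1L3 : c1 ∈ L 3 := by
              by_contra hn
              have hsub3 : L 3 ⊆ {f, e} := by
                intro x hx
                have hxm : x ∈ L 3 \ {c1} :=
                  Finset.mem_sdiff.mpr ⟨hx, by
                    simp only [Finset.mem_singleton]
                    exact fun h => hn (h ▸ hx)⟩
                rcases hsub x hxm with rfl | rfl <;> simp
              have := (Finset.card_le_card hsub3).trans (card2 f e)
              omega
            have hPA1 : ¬(L 9 ⊆ L 8 ∧ L 7 \ {c1} ⊆ L 8 ∧ (L 8).card ≤ 3) := by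
              intro hb
              exact hfc1 ((uniq (P := L 7) (Q := L 8) (by omega) hAf.2.1
                hb.2.1).symm ▸ rfl)
            have hPB1 : ¬(L 11 ⊆ L 10 ∧ L 5 \ {c1} ⊆ L 10 ∧ (L 10).card ≤ 3) := by
              intro hb
              exact hec1 ((uniq (P := L 5) (Q := L 10) (by omega) hBe.2.1
                hb.2.1).symm ▸ rfl)
            by_cases hy : ∃ y, y ∈ L 1 ∧ y ≠ c0 ∧ y ≠ c1
            · obtain ⟨y, my, hy0, hy1⟩ := hy
              obtain ⟨c2, m2, n20, n2y, n21⟩ := pick3 (L 2) c0 y c1 h2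
              exact finish L h4 h5 h6 h7 h8 h9 h10 h11 c0 y c2 c1 m0 my m2 hc1L3
                hy0.symm n20.symm n2y.symm hy1 n21
                (mk_hallA L c2 c1 hPA1) (mk_hallB L c2 c1 hPB1)
            · push_neg at hy
              have h01 : c0 ∈ L 1 := by
                by_contra hn
                have hsub1 : L 1 ⊆ {c1} := by
                  intro z hz
                  have hz0 : z ≠ c0 := fun h => hn (h ▸ hz)
                  simp [hy z hz hz0]
                have := Finset.card_le_card hsub1
                simp only [Finset.card_singleton] at this
                omega
              obtain ⟨c0', m0', h00⟩ := pick1 (L 0) c0 h0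
              obtain ⟨c2, m2, n20', n20, n21⟩ := pick3 (L 2) c0' c0 c1 h2
              exact finish L h4 h5 h6 h7 h8 h9 h10 h11 c0' c0 c2 c1 m0' h01 m2
                hc1L3 h00 n20'.symm n20.symm n10.symm n21
                (mk_hallA L c2 c1 hPA1) (mk_hallB L c2 c1 hPB1)
    have hb1 := hBad t1 ht1
    have hb2 := hBad t2 ht2
    rcases hb1 with hA1 | hB1 <;> rcases hb2 with hA2 | hB2
    · exact absurd (uniq (P := L 7) (Q := L 8) (by omega) hA1.2.1 hA2.2.1) hne12
    · exact key t1 t2 ht1 ht2 hne12 hA1 hB2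
    · exact key t2 t1 ht2 ht1 hne12.symm hA2 hB1
    · exact absurd (uniq (P := L 5) (Q := L 10) (by omega) hB1.2.1 hB2.2.1) hne12
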